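/- arXiv:math/0406155 — 13 statements merged into one kernel-verified Lean document; each statement's English description precedes it below -/
import Mathlib

section
/- Let S = {a_1, ..., a_n} be a factor-closed set of positive integers (i.e., every divisor of an element of S is in S). Then the determinant of the GCD matrix (gcd(a_i, a_j))_{1 ≤ i,j ≤ n} equals φ(a_1)·φ(a_2)···φ(a_n), where φ is Euler's totient function. -/
/-!
Since `n = ∑_{d ∣ n} φ d` and a factor-closed `S` contains every divisor of `gcd a b`, the GCD
matrix equals `E * diag(φ) * Eᵀ`, where `E a d = [d ∣ a]` is the divisibility matrix of `S`.
Ordered increasingly, `E` is unitriangular, so the determinant is `∏ φ a`.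
-/

open Finset Matrix

def dvdMatrix (R : Type*) [Zero R] [One R] (S : Finset ℕ) : Matrix S S R :=
  of fun i j => if (j : ℕ) ∣ i then 1 else 0

section
variable {R : Type*} {S : Finset ℕ}

theorem dvdMatrix_isLowerTriangular [Zero R] [One R] (hpos : ∀ a ∈ S, 0 < a) :
    (dvdMatrix R S).IsLowerTriangular := by
  intro i j (hij : (i : ℕ) < j)
  exact if_neg fun hji => (Nat.le_of_dvd (hpos _ i.2) hji).not_gt hij

theorem det_dvdMatrix [CommRing R] (hpos : ∀ a ∈ S, 0 < a) : (dvdMatrix R S).det = 1 := by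
  rw [det_of_isLowerTriangular _ (dvdMatrix_isLowerTriangular hpos)]
  exact prod_eq_one fun i _ => if_pos dvd_rfl

theorem filter_dvd_eq_divisors (hfc : ∀ a ∈ S, ∀ d, d ∣ a → d ∈ S) {n : ℕ}
    (hn : n ∈ S) (hn0 : n ≠ 0) : {k ∈ S | k ∣ n} = n.divisors := by
  ext k
  simp only [mem_filter, Nat.mem_divisors]
  exact ⟨fun ⟨_, hk⟩ => ⟨hk, hn0⟩, fun ⟨hk, _⟩ => ⟨hfc n hn k hk, hk⟩⟩

theorem dvdMatrix_mul_diagonal_mul_transpose [NonAssocSemiring R] (f : ℕ → R) (i j : S) :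
    (dvdMatrix R S * diagonal (fun k : S => f k) * (dvdMatrix R S)ᵀ) i j =
      ∑ k ∈ S with k ∣ Nat.gcd i j, f k := by
  simp only [mul_apply, diagonal_apply, transpose_apply, dvdMatrix, of_apply, mul_ite, mul_zero,
    sum_ite_eq', mem_univ, if_true]
  rw [sum_filter, ← sum_coe_sort S]
  refine sum_congr rfl fun k _ => ?_
  simp only [Nat.dvd_gcd_iff]
  split_ifs <;> simp_all

theorem gcdMatrix_eq_dvdMatrix_mul_diagonal_totient [NonAssocSemiring R] (hpos : ∀ a ∈ S, 0 < a)
    (hfc : ∀ a ∈ S, ∀ d, d ∣ a → d ∈ S) :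
    (of fun i j : S => (Nat.gcd i j : R)) =
      dvdMatrix R S * diagonal (fun k : S => (Nat.totient k : R)) * (dvdMatrix R S)ᵀ := by
  ext i j
  have hgcd : Nat.gcd i j ∈ S := hfc i i.2 _ (Nat.gcd_dvd_left _ _)
  rw [of_apply, dvdMatrix_mul_diagonal_mul_transpose (fun k => (Nat.totient k : R)),
    filter_dvd_eq_divisors hfc hgcd (Nat.gcd_pos_of_pos_left _ (hpos i i.2)).ne',
    ← Nat.cast_sum, Nat.sum_totient]

end

/-- **Smith's theorem.** If `S` is a factor-closed set of positive integers, then the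
determinant of the GCD matrix `(gcd aᵢ aⱼ)` equals the product of `φ(a)` over `a ∈ S`. -/
theorem smith_gcd_det (S : Finset ℕ) (hpos : ∀ a ∈ S, 0 < a)
    (hfc : ∀ a ∈ S, ∀ d, d ∣ a → d ∈ S) :
    Matrix.det (Matrix.of fun i j : S => (Nat.gcd i j : ℤ)) =
      ∏ a ∈ S, (Nat.totient a : ℤ) := by
  rw [gcdMatrix_eq_dvdMatrix_mul_diagonal_totient hpos hfc, det_mul, det_mul, det_transpose,
    det_dvdMatrix hpos, one_mul, mul_one, det_diagonal]
  exact prod_coe_sort S (fun a => (Nat.totient a : ℤ))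
end

section
/- Let P be a finite partially ordered set and let F, G : P × P → R be functions into a commutative ring R such that F(a,b) = 0 and G(a,b) = 0 unless a ≤ b. Define the matrix M indexed by P with entries M(a,b) = Σ_{c ∈ P} F(c,a)·G(c,b). Then det M = Π_{a ∈ P} F(a,a)·G(a,a). -/
/-! Writing `M = Fᵀ G` as a product of matrices, `det M = det F * det G`. A matrix supported on
`{(a, b) | a ≤ b}` becomes upper triangular once `P` is reindexed along a linear extension of its
order, so its determinant is the product of its diagonal entries. -/

open Matrix

theorem Matrix.det_eq_prod_diag_of_apply_eq_zero_of_not_le {P : Type*} [Fintype P]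
    [PartialOrder P] [DecidableEq P] {R : Type*} [CommRing R] (M : Matrix P P R)
    (hM : ∀ a b, ¬ a ≤ b → M a b = 0) : M.det = ∏ a, M a a := by
  let e : P ≃ LinearExtension P := Equiv.refl P
  let _ : Fintype (LinearExtension P) := ‹Fintype P›
  have hupper : (reindex e e M).IsUpperTriangular := fun i j hji =>
    hM _ _ fun hle => (toLinearExtension.monotone hle).not_gt hji
  rw [← det_reindex_self e M, det_of_isUpperTriangular hupper, ← e.prod_comp]
  rfl

/-- For a finite poset `P` and incidence-algebra elements `F, G` over a commutative ring `R`,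
the matrix with entries `∑ c, F c a * G c b` has determinant `∏ a, F a a * G a a`. -/
theorem det_incidence_matrix {P : Type*} [Fintype P] [PartialOrder P] [DecidableEq P]
    {R : Type*} [CommRing R] (F G : P → P → R)
    (hF : ∀ a b, ¬ a ≤ b → F a b = 0) (hG : ∀ a b, ¬ a ≤ b → G a b = 0) :
    Matrix.det (Matrix.of fun a b : P => ∑ c : P, F c a * G c b) =
      ∏ a : P, F a a * G a a := by
  have hM : (Matrix.of fun a b : P => ∑ c : P, F c a * G c b) = (of F)ᵀ * of G := by
    ext a b
    simp only [of_apply, mul_apply, transpose_apply]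
  rw [hM, det_mul, det_transpose,
    det_eq_prod_diag_of_apply_eq_zero_of_not_le (of F) hF,
    det_eq_prod_diag_of_apply_eq_zero_of_not_le (of G) hG, ← Finset.prod_mul_distrib]
  rfl
end

section
/- Let P be a finite poset, F, G ∈ I(P,R) elements of the incidence algebra over a commutative ring R, and f, g : P → R arbitrary functions. Define the matrix M indexed by P with entries M(a,b) = Σ_{c ∈ P} F(c,a)·f(c)·G(c,b)·g(c). Then det M = Π_{a ∈ P} F(a,a)·f(a)·G(a,a)·g(a). -/
open Matrix

theorem Matrix.det_of_eq_zero_of_not_le {P R : Type*} [Fintype P] [PartialOrder P]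
    [DecidableEq P] [CommRing R] (M : Matrix P P R) (hM : ∀ i j, ¬ i ≤ j → M i j = 0) :
    M.det = ∏ i, M i i := by
  let _ : Fintype (LinearExtension P) := ‹Fintype P›
  let _ : DecidableEq (LinearExtension P) := ‹DecidableEq P›
  exact det_of_isUpperTriangular (m := LinearExtension P) (M := M)
    fun i j hji => hM i j fun hij => (toLinearExtension.monotone hij).not_gt hji

/-- For a finite poset `P`, incidence-algebra elements `F, G` over a commutative ring `R`,
and arbitrary functions `f, g : P → R`, the matrix with entries
`∑ c, F c a * f c * G c b * g c` has determinant `∏ a, F a a * f a * G a a * g a`. -/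
theorem det_incidence_matrix_weighted {P : Type*} [Fintype P] [PartialOrder P] [DecidableEq P]
    {R : Type*} [CommRing R] (F G : P → P → R) (f g : P → R)
    (hF : ∀ a b, ¬ a ≤ b → F a b = 0) (hG : ∀ a b, ¬ a ≤ b → G a b = 0) :
    Matrix.det (Matrix.of fun a b : P => ∑ c : P, F c a * f c * G c b * g c) =
      ∏ a : P, F a a * f a * G a a * g a := by
  have hM : (Matrix.of fun a b : P => ∑ c : P, F c a * f c * G c b * g c) =
      (diagonal f * of F)ᵀ * (diagonal g * of G) := by
    ext a b
    rw [mul_apply]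
    simp only [transpose_apply, diagonal_mul, of_apply]
    exact Finset.sum_congr rfl fun c _ => by ring
  rw [hM, det_mul, det_transpose, det_mul, det_mul, det_diagonal, det_diagonal,
    det_of_eq_zero_of_not_le (of F) hF, det_of_eq_zero_of_not_le (of G) hG]
  simp only [of_apply, Finset.prod_mul_distrib]
  ring
end

section
/- Let P_n = {1, 2, ..., n} ordered by divisibility, let f : P_n → R and G : P_n → R be functions into a commutative ring, and define the matrix M with entries M(a,b) = Σ_{c | gcd(a,b)} f(c)·G(a/c). Then det M = f(1)·f(2)···f(n)·G(1)^n. -/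
/-!
The matrix factors as `A * Bᵀ`, where `A a c = [c ∣ a] f(c) G(a/c)` and `B b c = [c ∣ b]`:
the `c`-th term of the product is nonzero exactly when `c` is a common divisor of `a` and `b`,
and every such `c` lies in `{1,…,n}`. Both factors are lower triangular since `c ∣ a` forces
`c ≤ a`, so `det A = ∏ f(a) G(1)` and `det B = 1`.
-/

open Matrix

namespace Nat

variable {R : Type*} [CommRing R]

def divisorMatrix (s : Finset ℕ) (g : ℕ → ℕ → R) : Matrix s s R :=
  of fun a c => if (c : ℕ) ∣ a then g a c else 0

theorem isLowerTriangular_divisorMatrix {s : Finset ℕ} (hs : 0 ∉ s) (g : ℕ → ℕ → R) :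
    (divisorMatrix s g).IsLowerTriangular := by
  intro a c hac
  have ha : (a : ℕ) ≠ 0 := ne_of_mem_of_not_mem a.2 hs
  have hnd : ¬ (c : ℕ) ∣ a := fun h => (Nat.le_of_dvd (Nat.pos_of_ne_zero ha) h).not_gt hac
  simp [divisorMatrix, hnd]

theorem det_divisorMatrix {s : Finset ℕ} (hs : 0 ∉ s) (g : ℕ → ℕ → R) :
    (divisorMatrix s g).det = ∏ a : s, g a a := by
  rw [det_of_isLowerTriangular _ (isLowerTriangular_divisorMatrix hs g)]
  simp [divisorMatrix]

theorem filter_dvd_and_dvd_eq_divisors_gcd {s : Finset ℕ} (hs : ∀ a ∈ s, a.divisors ⊆ s)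
    {a : ℕ} (ha : a ∈ s) (ha0 : a ≠ 0) (b : ℕ) :
    s.filter (fun c => c ∣ a ∧ c ∣ b) = (a.gcd b).divisors := by
  ext c
  simp only [Finset.mem_filter, mem_divisors, dvd_gcd_iff, ne_eq, gcd_eq_zero_iff, ha0,
    false_and, not_false_eq_true, and_true]
  exact ⟨And.right, fun h => ⟨hs a ha (mem_divisors.2 ⟨h.1, ha0⟩), h⟩⟩

theorem of_sum_divisors_gcd_eq_mul {s : Finset ℕ} (hs0 : 0 ∉ s) (hs : ∀ a ∈ s, a.divisors ⊆ s)
    (g : ℕ → ℕ → R) :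
    of (fun a b : s => ∑ c ∈ (Nat.gcd a b).divisors, g a c) =
      divisorMatrix s g * (divisorMatrix s fun _ _ => 1)ᵀ := by
  ext a b
  have ha0 : (a : ℕ) ≠ 0 := ne_of_mem_of_not_mem a.2 hs0
  rw [of_apply, ← filter_dvd_and_dvd_eq_divisors_gcd hs a.2 ha0, Finset.sum_filter,
    ← Finset.sum_coe_sort s, mul_apply]
  refine Finset.sum_congr rfl fun c _ => ?_
  by_cases hca : (c : ℕ) ∣ a <;> by_cases hcb : (c : ℕ) ∣ b <;> simp [divisorMatrix, hca, hcb]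

theorem divisors_subset_Icc {a n : ℕ} (ha : a ≤ n) : a.divisors ⊆ Finset.Icc 1 n :=
  fun _ hd => Finset.mem_Icc.2 ⟨pos_of_mem_divisors hd, (divisor_le hd).trans ha⟩

end Nat

/-- **Apostol-type determinant.** For `{1,…,n}` ordered by divisibility and functions
`f, G` into a commutative ring, the matrix with entries `∑_{c ∣ gcd(a,b)} f(c)·G(a/c)`
has determinant `f(1)⋯f(n)·G(1)ⁿ`. -/
theorem det_apostol {R : Type*} [CommRing R] (n : ℕ) (f G : ℕ → R) :
    Matrix.det (Matrix.of fun a b : Finset.Icc 1 n =>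
        ∑ c ∈ (Nat.gcd a b).divisors, f c * G ((a : ℕ) / c)) =
      (∏ a ∈ Finset.Icc 1 n, f a) * G 1 ^ n := by
  have hs0 : 0 ∉ Finset.Icc 1 n := by simp
  have hs : ∀ a ∈ Finset.Icc 1 n, a.divisors ⊆ Finset.Icc 1 n :=
    fun _ ha => Nat.divisors_subset_Icc (Finset.mem_Icc.1 ha).2
  rw [Nat.of_sum_divisors_gcd_eq_mul hs0 hs fun a c => f c * G (a / c), det_mul, det_transpose,
    Nat.det_divisorMatrix hs0, Nat.det_divisorMatrix hs0]
  have hdiag (a : Finset.Icc 1 n) : (a : ℕ) / a = 1 :=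
    Nat.div_self (Finset.mem_Icc.1 a.2).1
  simp [hdiag, Finset.prod_mul_distrib, Finset.prod_attach]
end

section
/- Let n be a positive integer and let c(a,b) = Σ_{d | gcd(a,b)} d·μ(b/d) denote Ramanujan's sum, where μ is the number-theoretic Möbius function. Then the determinant of the n×n matrix (c(a,b))_{1 ≤ a,b ≤ n} equals n!. -/
/-!
Since `d ∣ gcd a b` iff `d ∣ a` and `d ∣ b`, and all divisors of `a ≤ n` lie in `{1, …, n}`,
the matrix factors as `Z * F` with `Z a d = [d ∣ a]` and `F d b = [d ∣ b] · d · μ (b / d)`.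
Divisibility of positive integers forces `d ≤ a`, so `Z` is unitriangular and `F` is
triangular with diagonal entries `d · μ 1 = d`; hence the determinant is `1 · n!`.
-/

open Finset

namespace Matrix

variable {R : Type*} [CommRing R] {s : Finset ℕ}

theorem isLowerTriangular_of_not_dvd (hs : 0 ∉ s) {M : Matrix s s R}
    (hM : ∀ i j : s, ¬ (j : ℕ) ∣ i → M i j = 0) : M.IsLowerTriangular := by
  intro i j hij
  refine hM i j fun hdvd => ?_
  have hi : (i : ℕ) ≠ 0 := fun h => hs (h ▸ i.2)
  exact (Nat.le_of_dvd (Nat.pos_of_ne_zero hi) hdvd).not_gt hij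

theorem isUpperTriangular_of_not_dvd (hs : 0 ∉ s) {M : Matrix s s R}
    (hM : ∀ i j : s, ¬ (i : ℕ) ∣ j → M i j = 0) : M.IsUpperTriangular :=
  (isLowerTriangular_of_not_dvd hs (M := Mᵀ) fun i j h => hM j i h).transpose

theorem of_sum_divisors_gcd_eq_mul (hs : 0 ∉ s) (hdiv : ∀ a ∈ s, a.divisors ⊆ s)
    (g : ℕ → ℕ → R) :
    of (fun a b : s => ∑ d ∈ (Nat.gcd a b).divisors, g d b) =
      of (fun a d : s => if (d : ℕ) ∣ a then (1 : R) else 0) *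
        of (fun d b : s => if (d : ℕ) ∣ b then g d b else 0) := by
  ext a b
  have ha : (a : ℕ) ≠ 0 := fun h => hs (h ▸ a.2)
  have hgcd : (Nat.gcd a b).divisors = s.filter (· ∣ Nat.gcd a b) := by
    ext d
    simp only [mem_filter, Nat.mem_divisors, Nat.gcd_ne_zero_left ha, ne_eq, not_false_eq_true,
      and_true, iff_and_self]
    exact fun hd => hdiv a a.2 (Nat.mem_divisors.2 ⟨hd.trans (Nat.gcd_dvd_left _ _), ha⟩)
  simp only [mul_apply, of_apply, ite_mul, one_mul, zero_mul, ← ite_and, hgcd, sum_filter,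
    Nat.dvd_gcd_iff]
  exact (sum_coe_sort s fun d => if d ∣ a ∧ d ∣ b then g d b else 0).symm

theorem det_of_sum_divisors_gcd (hs : 0 ∉ s) (hdiv : ∀ a ∈ s, a.divisors ⊆ s)
    (g : ℕ → ℕ → R) :
    det (of fun a b : s => ∑ d ∈ (Nat.gcd a b).divisors, g d b) = ∏ a ∈ s, g a a := by
  rw [of_sum_divisors_gcd_eq_mul hs hdiv, det_mul,
    det_of_isLowerTriangular _ (isLowerTriangular_of_not_dvd hs fun _ _ h => by simp [h]),
    det_of_isUpperTriangular (isUpperTriangular_of_not_dvd hs fun _ _ h => by simp [h])]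
  simp only [of_apply, dvd_refl, if_true, prod_const_one, one_mul]
  exact prod_coe_sort s fun a => g a a

end Matrix

theorem Nat.divisors_subset_Icc_s4 {n a : ℕ} (ha : a ≤ n) : a.divisors ⊆ Icc 1 n := fun _ hd =>
  mem_Icc.2 ⟨Nat.pos_of_mem_divisors hd, (Nat.divisor_le hd).trans ha⟩

open ArithmeticFunction in
/-- **Apostol's theorem.** The determinant of the `n × n` matrix of Ramanujan sums
`c(a,b) = ∑_{d ∣ gcd(a,b)} d·μ(b/d)` equals `n!`. -/
theorem det_ramanujan_sum (n : ℕ) :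
    Matrix.det (Matrix.of fun a b : Finset.Icc 1 n =>
        ∑ d ∈ (Nat.gcd a b).divisors, (d : ℤ) * moebius ((b : ℕ) / d)) =
      (Nat.factorial n : ℤ) := by
  rw [Matrix.det_of_sum_divisors_gcd (by simp)
    (fun _ ha => Nat.divisors_subset_Icc_s4 (mem_Icc.1 ha).2) fun d b => (d : ℤ) * moebius (b / d)]
  calc ∏ a ∈ Icc 1 n, (a : ℤ) * moebius (a / a)
      = ∏ a ∈ Icc 1 n, (a : ℤ) := prod_congr rfl fun a ha => by
        rw [Nat.div_self (mem_Icc.1 ha).1, moebius_apply_one, mul_one]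
    _ = Nat.factorial n := by
        rw [← Nat.cast_prod, ← Ico_add_one_right_eq_Icc, prod_Ico_id_eq_factorial]
end

section
/- Let L be a finite meet semilattice and f ∈ I(L,R) an element of the incidence algebra over a commutative ring R. Define the matrix M indexed by L with entries M(a,b) = f(a ∧ b, a). Then det M = Π_{a ∈ L} ( Σ_{c ∈ L} μ(c,a)·f(c,a) ), where μ is the Möbius function of L. -/
/-!
Write `M` for the matrix `f (a ⊓ b) a`. Möbius inversion of `f · a` gives
`f x a = ∑_{c ≤ x} g c a` with `g c a = ∑_d μ(d,c) f(d,a)`, and since `c ≤ a ⊓ b ↔ c ≤ a ∧ c ≤ b`,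
`M = P * Z` where `P a c = [c ≤ a] g c a` and `Z` is the matrix of the zeta function.
Both factors are triangular with respect to the order of `L`, `Z` with ones on the diagonal,
so `det M = ∏_a P a a = ∏_a g a a`.
-/

open Finset

namespace Matrix

variable {m R : Type*} [Fintype m] [DecidableEq m] [PartialOrder m] [CommRing R]

theorem det_of_apply_eq_zero_of_not_le (M : Matrix m m R) (h : ∀ i j, ¬ i ≤ j → M i j = 0) :
    M.det = ∏ i, M i i := by
  let _ : Fintype (LinearExtension m) := ‹Fintype m›
  let _ : DecidableEq (LinearExtension m) := ‹DecidableEq m›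
  let M' : Matrix (LinearExtension m) (LinearExtension m) R := Matrix.of fun i j => M i j
  have hM' : M'.IsUpperTriangular := fun i j hji =>
    h i j fun hij => hji.not_ge ((toLinearExtension (α := m)).monotone hij)
  exact (det_of_isUpperTriangular hM' :)

theorem det_of_apply_eq_zero_of_not_ge (M : Matrix m m R) (h : ∀ i j, ¬ j ≤ i → M i j = 0) :
    M.det = ∏ i, M i i := by
  rw [← det_transpose, det_of_apply_eq_zero_of_not_le Mᵀ fun i j => h j i]
  rfl

end Matrix

namespace IncidenceAlgebra

theorem sum_filter_le_sum_mu_mul {α 𝕜 : Type*} [Ring 𝕜] [Fintype α] [PartialOrder α]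
    [LocallyFiniteOrder α] [DecidableEq α] [DecidableLE α] (h : α → 𝕜) (x : α) :
    ∑ c with c ≤ x, ∑ d, mu 𝕜 d c * h d = h x := by
  rw [sum_comm]
  have hmu : ∀ d, ∑ c with c ≤ x, mu 𝕜 d c = if d = x then 1 else 0 := by
    intro d
    rw [← sum_Icc_mu_right]
    refine (sum_subset (fun c hc => ?_) fun c hc hnc => ?_).symm
    · exact mem_filter.2 ⟨mem_univ _, (mem_Icc.1 hc).2⟩
    · exact apply_eq_zero_of_not_le (fun hdc => hnc (mem_Icc.2 ⟨hdc, (mem_filter.1 hc).2⟩)) _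
  simp [← sum_mul, hmu]

theorem det_of {α R : Type*} [Fintype α] [DecidableEq α] [PartialOrder α] [CommRing R]
    (g : IncidenceAlgebra R α) : (Matrix.of ⇑g).det = ∏ a, g a a :=
  Matrix.det_of_apply_eq_zero_of_not_le _ fun _ _ h => apply_eq_zero_of_not_le h g

end IncidenceAlgebra

open IncidenceAlgebra in
theorem Matrix.of_inf_eq_mul_zeta {L R : Type*} [Fintype L] [SemilatticeInf L]
    [LocallyFiniteOrder L] [DecidableEq L] [DecidableLE L] [Ring R] (f : L → L → R) :
    Matrix.of (fun a b => f (a ⊓ b) a) =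
      Matrix.of (fun a c => if c ≤ a then ∑ d, mu R d c * f d a else 0) *
        Matrix.of ⇑(zeta R : IncidenceAlgebra R L) := by
  ext a b
  rw [mul_apply, of_apply, ← sum_filter_le_sum_mu_mul (f · a) (a ⊓ b), sum_filter]
  refine sum_congr rfl fun c _ => ?_
  by_cases hca : c ≤ a <;> by_cases hcb : c ≤ b <;> simp [hca, hcb]

theorem det_lindstrom_general {L : Type*} [Fintype L] [SemilatticeInf L] [DecidableEq L]
    [LocallyFiniteOrder L] {R : Type*} [CommRing R] (f : L → L → R) :
    Matrix.det (Matrix.of fun a b : L => f (a ⊓ b) a) =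
      ∏ a : L, ∑ c : L, IncidenceAlgebra.mu R c a * f c a := by
  classical
  rw [Matrix.of_inf_eq_mul_zeta, Matrix.det_mul,
    Matrix.det_of_apply_eq_zero_of_not_ge _ fun a c hca => by simp [hca],
    IncidenceAlgebra.det_of]
  simp

/-- **Lindström's theorem.** For a finite meet semilattice `L` and an incidence-algebra element
`f` over a commutative ring `R`, the matrix with entries `f (a ⊓ b) a` has determinant
`∏ a, ∑ c, μ(c,a) · f(c,a)`, where `μ` is the Möbius function of `L`. -/
theorem det_lindstrom {L : Type*} [Fintype L] [SemilatticeInf L] [DecidableEq L]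
    [LocallyFiniteOrder L] {R : Type*} [CommRing R] (f : L → L → R)
    (hf : ∀ a b, ¬ a ≤ b → f a b = 0) :
    Matrix.det (Matrix.of fun a b : L => f (a ⊓ b) a) =
      ∏ a : L, ∑ c : L, IncidenceAlgebra.mu R c a * f c a :=
  det_lindstrom_general f
end

section
/- Let L be a finite meet semilattice and f : L → R a function into a commutative ring. Define the matrix M indexed by L with entries M(a,b) = f(a ∧ b). Then det M = Π_{a ∈ L} ( Σ_{c ≤ a} μ(c,a)·f(c) ). -/
/-!
Let `g` be the Möbius transform of `f`, so that `f x = ∑_{c ≤ x} g c`. Since `c ≤ a ⊓ b` iff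
`c ≤ a` and `c ≤ b`, the matrix factors as `ζ · diag g · ζᵀ`, where `ζ a c = [c ≤ a]` is the zeta
matrix. Listed along a linear extension of the order, `ζ` is unitriangular, so `det ζ = 1` and
the determinant is `∏ a, g a`.
-/

open Finset Matrix

namespace Matrix

variable {α R : Type*} [Fintype α] [DecidableEq α] [PartialOrder α] [CommRing R]

theorem det_of_apply_eq_zero_of_not_le_s7 (M : Matrix α α R) (hM : ∀ a c, ¬c ≤ a → M a c = 0) :
    M.det = ∏ a, M a a := by
  let e : α ≃ LinearExtension α := ⟨toLinearExtension, id, fun _ => rfl, fun _ => rfl⟩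
  let _ : Fintype (LinearExtension α) := .ofEquiv α e
  have hlower : (reindex e e M).IsLowerTriangular := by
    refine blockTriangular_reindex_iff.2 fun a c hlt => hM a c fun hle => ?_
    exact (toLinearExtension.monotone hle).not_gt hlt
  rw [← det_reindex_self e, det_of_isLowerTriangular _ hlower]
  exact e.symm.prod_comp fun a => M a a

end Matrix

section ZetaMatrix

def zetaMatrix {α : Type*} (R : Type*) [LE α] [DecidableLE α] [Zero R] [One R] : Matrix α α R :=
  of fun a c => if c ≤ a then 1 else 0

variable {α R : Type*} [Fintype α] [DecidableEq α]

theorem det_zetaMatrix [PartialOrder α] [DecidableLE α] [CommRing R] :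
    (zetaMatrix R : Matrix α α R).det = 1 :=
  (det_of_apply_eq_zero_of_not_le_s7 _ fun _ _ h => if_neg h).trans
    (prod_eq_one fun _ _ => if_pos le_rfl)

theorem zetaMatrix_mul_diagonal_mul_transpose [SemilatticeInf α] [DecidableLE α] [CommSemiring R]
    (g : α → R) :
    zetaMatrix R * diagonal g * (zetaMatrix R)ᵀ =
      of fun a b => ∑ c ∈ univ.filter (· ≤ a ⊓ b), g c := by
  ext a b
  rw [mul_apply]
  simp only [mul_diagonal, transpose_apply, zetaMatrix, of_apply, sum_filter, le_inf_iff]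
  refine sum_congr rfl fun c _ => ?_
  split_ifs <;> simp_all

end ZetaMatrix

section MoebiusTransform

variable {α R : Type*} [Fintype α] [PartialOrder α] [LocallyFiniteOrder α] [DecidableEq α]
  [DecidableLE α] [Ring R]

def moebiusTransform (f : α → R) (a : α) : R :=
  ∑ c ∈ univ.filter (· ≤ a), IncidenceAlgebra.mu R c a * f c

theorem sum_moebiusTransform (f : α → R) (a : α) :
    ∑ c ∈ univ.filter (· ≤ a), moebiusTransform f c = f a := by
  have hswap : ∑ c ∈ univ.filter (· ≤ a), moebiusTransform f c =
      ∑ d ∈ univ.filter (· ≤ a), (∑ c ∈ Icc d a, IncidenceAlgebra.mu R d c) * f d := by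
    simp only [moebiusTransform, sum_mul]
    refine sum_comm' fun c d => ?_
    simp only [mem_filter, mem_univ, true_and, mem_Icc]
    exact ⟨fun ⟨hca, hdc⟩ => ⟨⟨hdc, hca⟩, hdc.trans hca⟩, fun ⟨⟨hdc, hca⟩, _⟩ => ⟨hca, hdc⟩⟩
  simp [hswap, IncidenceAlgebra.sum_Icc_mu_right]

end MoebiusTransform

/-- **Wilf/Lindström.** For a finite meet semilattice `L` and `f : L → R`, the matrix with
entries `f (a ⊓ b)` has determinant `∏ a, ∑ c ≤ a, μ(c,a) · f(c)`. -/
theorem det_wilf {L : Type*} [Fintype L] [SemilatticeInf L] [DecidableEq L]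
    [LocallyFiniteOrder L] [DecidableRel ((· ≤ ·) : L → L → Prop)]
    {R : Type*} [CommRing R] (f : L → R) :
    Matrix.det (Matrix.of fun a b : L => f (a ⊓ b)) =
      ∏ a : L, ∑ c ∈ Finset.univ.filter (· ≤ a), IncidenceAlgebra.mu R c a * f c := by
  have hfactor : (of fun a b : L => f (a ⊓ b)) =
      zetaMatrix R * diagonal (moebiusTransform f) * (zetaMatrix R)ᵀ := by
    simp only [zetaMatrix_mul_diagonal_mul_transpose, sum_moebiusTransform]
  rw [hfactor, det_mul, det_mul, det_transpose, det_zetaMatrix, det_diagonal, one_mul, mul_one]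
  rfl
end

section
/- Let L be a finite meet semilattice, f ∈ I(L,R), and S = {a_1,...,a_n} ⊆ L a meet-closed subset listed in a linear extension order (a_i < a_j implies i < j). Define the matrix M with entries M(a_i, a_j) = f(a_i ∧ a_j, a_i). Then det M = Π_{i=1}^n ( Σ_{d ⊴ a_i} Σ_{c ∈ L} μ(c,d)·f(c,a_i) ), where d ⊴ a_i means d ≤ a_i and d ≰ a_j for all j < i, and μ is the Möbius function of L. -/
/-!
Möbius inversion turns the entry `f (aᵢ ⊓ aⱼ) aᵢ` into `∑_{d ≤ aᵢ ⊓ aⱼ} g d i` with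
`g d i = ∑_c μ(c,d) f(c,aᵢ)`. Every `d ≤ aⱼ` has a unique first index `k` with `d ⊴ aₖ`, and
since `aₖ ⊓ aⱼ` is again some `aₘ` with `m ≤ k`, minimality of `k` forces `aₖ ≤ aⱼ`. Sorting
the terms by this `k` factors the matrix as `A * Z` with `Z k j = [aₖ ≤ aⱼ]` unitriangular and
`A i k = ∑_{d ⊴ aₖ, d ≤ aᵢ} g d i` lower triangular with the claimed diagonal.
-/

open Finset

namespace IncidenceAlgebra

variable {α 𝕜 : Type*} [PartialOrder α] [Fintype α] [LocallyFiniteOrder α] [DecidableEq α]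
  [DecidableLE α] [Ring 𝕜]

theorem sum_filter_le_mu_right (c x : α) :
    ∑ d ∈ univ.filter (· ≤ x), mu 𝕜 c d = if c = x then 1 else 0 := by
  rw [← sum_Icc_mu_right]
  refine (sum_subset (fun d hd ↦ by simp [(mem_Icc.1 hd).2]) fun d hdx hd ↦ ?_).symm
  exact apply_eq_zero_of_not_le (fun hcd ↦ hd (mem_Icc.2 ⟨hcd, (mem_filter.1 hdx).2⟩)) _

theorem sum_filter_le_sum_mu_mul_s8 (g : α → 𝕜) (x : α) :
    ∑ d ∈ univ.filter (· ≤ x), ∑ c, mu 𝕜 c d * g c = g x := by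
  simp_rw [sum_comm (s := univ.filter (· ≤ x)), ← sum_mul, sum_filter_le_mu_right, ite_mul,
    one_mul, zero_mul, sum_ite_eq', mem_univ, if_true]

end IncidenceAlgebra

/-- The relation `d ⊴ a k`. -/
def IsFirstUpperBound {ι L : Type*} [LT ι] [LE L] (a : ι → L) (d : L) (k : ι) : Prop :=
  d ≤ a k ∧ ∀ j, j < k → ¬ d ≤ a j

instance {ι L : Type*} [Fintype ι] [LT ι] [DecidableLT ι] [LE L] [DecidableLE L] (a : ι → L)
    (d : L) : DecidablePred (IsFirstUpperBound a d) :=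
  fun k ↦ inferInstanceAs (Decidable (_ ∧ ∀ j, j < k → _))

namespace IsFirstUpperBound

variable {ι L : Type*} [LinearOrder ι] {a : ι → L} {d : L} {j k l : ι}

theorem unique [LE L] (hk : IsFirstUpperBound a d k) (hl : IsFirstUpperBound a d l) : k = l :=
  le_antisymm (not_lt.1 fun h ↦ hk.2 l h hl.1) (not_lt.1 fun h ↦ hl.2 k h hk.1)

theorem exists_of_le [LE L] [WellFoundedLT ι] (h : d ≤ a j) : ∃ k, IsFirstUpperBound a d k := by
  obtain ⟨k, hk, hmin⟩ := wellFounded_lt.has_min {k | d ≤ a k} ⟨j, h⟩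
  exact ⟨k, hk, fun l hlk hl ↦ hmin l hl hlk⟩

theorem le_of_le [SemilatticeInf L] (hmeet : ∀ i j, ∃ k, a k = a i ⊓ a j)
    (hlin : ∀ i j, a i < a j → i < j) (hk : IsFirstUpperBound a d k) (hj : d ≤ a j) :
    a k ≤ a j := by
  obtain ⟨m, hm⟩ := hmeet k j
  have hdm : d ≤ a m := hm ▸ le_inf hk.1 hj
  rcases (hm ▸ inf_le_left : a m ≤ a k).lt_or_eq with hlt | heq
  · exact absurd hdm (hk.2 m (hlin m k hlt))
  · exact heq ▸ hm ▸ inf_le_right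

end IsFirstUpperBound

section Triangular

variable {ι L R : Type*} [Fintype ι] [LinearOrder ι] [CommRing R]

theorem det_of_ite_le_eq_one [PartialOrder L] [DecidableLE L] {a : ι → L}
    (hinj : Function.Injective a) (hlin : ∀ i j, a i < a j → i < j) :
    (Matrix.of fun k j ↦ if a k ≤ a j then (1 : R) else 0).det = 1 := by
  have htri : (Matrix.of fun k j ↦ if a k ≤ a j then (1 : R) else 0).IsUpperTriangular :=
    fun k j hjk ↦ if_neg fun hkj ↦ (hkj.lt_or_eq).elim (fun h ↦ (hlin _ _ h).not_gt hjk)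
      fun h ↦ hjk.ne' (hinj h)
  simp [Matrix.det_of_isUpperTriangular htri]

theorem det_of_sum_isFirstUpperBound [LE L] [Fintype L] [DecidableLE L] (a : ι → L)
    (g : L → ι → R) :
    (Matrix.of fun i k ↦
        ∑ d ∈ univ.filter (fun d ↦ IsFirstUpperBound a d k ∧ d ≤ a i), g d i).det =
      ∏ i, ∑ d ∈ univ.filter (IsFirstUpperBound a · i), g d i := by
  have htri : (Matrix.of fun i k ↦
      ∑ d ∈ univ.filter (fun d ↦ IsFirstUpperBound a d k ∧ d ≤ a i), g d i).IsLowerTriangular :=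
    fun i k hik ↦ sum_eq_zero fun d hd ↦
      absurd (mem_filter.1 hd).2.2 ((mem_filter.1 hd).2.1.2 i hik)
  rw [Matrix.det_of_isLowerTriangular _ htri]
  exact prod_congr rfl fun i _ ↦
    sum_congr (filter_congr fun d _ ↦ and_iff_left_of_imp And.left) fun _ _ ↦ rfl

end Triangular

section MeetClosed

variable {ι L M : Type*} [Fintype ι] [LinearOrder ι] [SemilatticeInf L] [DecidableLE L]
  {a : ι → L}

theorem sum_ite_isFirstUpperBound_and_le [AddCommMonoid M] (hmeet : ∀ i j, ∃ k, a k = a i ⊓ a j)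
    (hlin : ∀ i j, a i < a j → i < j) (d : L) (j : ι) (r : M) :
    ∑ k, (if IsFirstUpperBound a d k ∧ a k ≤ a j then r else 0) = if d ≤ a j then r else 0 := by
  split_ifs with hj
  · obtain ⟨k, hk⟩ := IsFirstUpperBound.exists_of_le hj
    rw [sum_eq_single k (fun l _ hlk ↦ if_neg fun hl ↦ hlk (hl.1.unique hk)) (by simp),
      if_pos ⟨hk, hk.le_of_le hmeet hlin hj⟩]
  · exact sum_eq_zero fun k _ ↦ if_neg fun hk ↦ hj (hk.1.1.trans hk.2)

theorem matrix_sum_le_inf_eq_mul [Fintype L] [Semiring M] (hmeet : ∀ i j, ∃ k, a k = a i ⊓ a j)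
    (hlin : ∀ i j, a i < a j → i < j) (g : L → ι → M) :
    Matrix.of (fun i j ↦ ∑ d ∈ univ.filter (· ≤ a i ⊓ a j), g d i) =
      Matrix.of (fun i k ↦ ∑ d ∈ univ.filter (fun d ↦ IsFirstUpperBound a d k ∧ d ≤ a i), g d i) *
        Matrix.of (fun k j ↦ if a k ≤ a j then 1 else 0) := by
  ext i j
  simp only [Matrix.mul_apply, Matrix.of_apply, mul_ite, mul_one, mul_zero]
  calc ∑ d ∈ univ.filter (· ≤ a i ⊓ a j), g d i
      = ∑ d ∈ univ.filter (· ≤ a i), if d ≤ a j then g d i else 0 := by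
        rw [← sum_filter, filter_filter]
        simp only [le_inf_iff]
    _ = ∑ d ∈ univ.filter (· ≤ a i), ∑ k,
          if IsFirstUpperBound a d k ∧ a k ≤ a j then g d i else 0 := by
        simp only [sum_ite_isFirstUpperBound_and_le hmeet hlin]
    _ = _ := by
        rw [sum_comm]
        refine sum_congr rfl fun k _ ↦ ?_
        split_ifs with hk <;> simp [hk, sum_filter, ← ite_and, and_comm]

end MeetClosed

theorem det_meet_closed_general {L : Type*} [Fintype L] [SemilatticeInf L] [DecidableEq L]
    [LocallyFiniteOrder L] [DecidableRel ((· ≤ ·) : L → L → Prop)]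
    {R : Type*} [CommRing R] (f : L → L → R)
    (n : ℕ) (a : Fin n → L) (hinj : Function.Injective a)
    (hmeet : ∀ i j, ∃ k, a k = a i ⊓ a j)
    (hlin : ∀ i j, a i < a j → i < j) :
    Matrix.det (Matrix.of fun i j : Fin n => f (a i ⊓ a j) (a i)) =
      ∏ i : Fin n,
        ∑ d ∈ Finset.univ.filter (fun d : L => d ≤ a i ∧ ∀ j, j < i → ¬ d ≤ a j),
          ∑ c : L, IncidenceAlgebra.mu R c d * f c (a i) := by
  have hmobius : Matrix.of (fun i j : Fin n => f (a i ⊓ a j) (a i)) =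
      Matrix.of fun i j ↦
        ∑ d ∈ univ.filter (· ≤ a i ⊓ a j), ∑ c, IncidenceAlgebra.mu R c d * f c (a i) := by
    ext i j
    exact (IncidenceAlgebra.sum_filter_le_sum_mu_mul_s8 (f · (a i)) _).symm
  rw [hmobius, matrix_sum_le_inf_eq_mul hmeet hlin, Matrix.det_mul, det_of_sum_isFirstUpperBound,
    det_of_ite_le_eq_one hinj hlin, mul_one]
  -- the two sides differ only in the `Decidable` instances of the filters
  congr!

/-- For a finite meet semilattice `L`, an incidence-algebra element `f`, and a meet-closed
subset `S = {a₁,…,aₙ}` of `L` listed in a linear extension order, the matrix with entries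
`f (aᵢ ⊓ aⱼ) aᵢ` has determinant `∏ᵢ ∑_{d ⊴ aᵢ} ∑_c μ(c,d)·f(c,aᵢ)`, where `d ⊴ aᵢ`
means `d ≤ aᵢ` and `d ≰ aⱼ` for all `j < i`. -/
theorem det_meet_closed {L : Type*} [Fintype L] [SemilatticeInf L] [DecidableEq L]
    [LocallyFiniteOrder L] [DecidableRel ((· ≤ ·) : L → L → Prop)]
    {R : Type*} [CommRing R] (f : L → L → R) (hf : ∀ a b, ¬ a ≤ b → f a b = 0)
    (n : ℕ) (a : Fin n → L) (hinj : Function.Injective a)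
    (hmeet : ∀ i j, ∃ k, a k = a i ⊓ a j)
    (hlin : ∀ i j, a i < a j → i < j) :
    Matrix.det (Matrix.of fun i j : Fin n => f (a i ⊓ a j) (a i)) =
      ∏ i : Fin n,
        ∑ d ∈ Finset.univ.filter (fun d : L => d ≤ a i ∧ ∀ j, j < i → ¬ d ≤ a j),
          ∑ c : L, IncidenceAlgebra.mu R c d * f c (a i) :=
  det_meet_closed_general f n a hinj hmeet hlin
end

section
/- Let P be a finite poset and F, G ∈ I(P,ℝ) with M(a,b) = Σ_{c ∈ P} F(c,a)·G(c,b) a symmetric real matrix indexed by P (rows and columns ordered by a linear extension of P). Then M is positive definite if and only if F(a,a)·G(a,a) > 0 for all a ∈ P. -/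
open Matrix Finset

section Aux

variable {P : Type*} [Fintype P] [PartialOrder P] [DecidableEq P]

private noncomputable def Ple : P ≃ LinearExtension P where
  toFun := toLinearExtension
  invFun x := show P from x
  left_inv _ := rfl
  right_inv _ := rfl

private lemma ple_inj : Function.Injective (toLinearExtension : P → LinearExtension P) :=
  fun _ _ h => h

/-- Determinant of a matrix triangular w.r.t. the partial order is the product of diagonal. -/
private lemma tri_det (A : Matrix P P ℝ)
    (hA : A.BlockTriangular (toLinearExtension : P → LinearExtension P)) :
    A.det = ∏ a, A a a := by
  letI : Fintype (LinearExtension P) := ‹Fintype P›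
  have h1 : A.det = (Matrix.reindex (Ple (P := P)) (Ple (P := P)) A).det :=
    (Matrix.det_reindex_self _ _).symm
  have h2 : (Matrix.reindex (Ple (P := P)) (Ple (P := P)) A).BlockTriangular id := by
    intro i j hij
    exact hA hij
  rw [h1, Matrix.det_of_upperTriangular h2]
  exact (Fintype.prod_equiv (Ple (P := P)) _ _ (fun a => rfl)).symm

private lemma core (F G : P → P → ℝ) (hF : ∀ a b, ¬ a ≤ b → F a b = 0)
    (hG : ∀ a b, ¬ a ≤ b → G a b = 0)
    (hsym : (Matrix.of fun a b : P => ∑ c : P, F c a * G c b).IsHermitian)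
    (hFd : ∀ a, F a a ≠ 0) :
    ∃ d : P → ℝ, (∀ a, d a * F a a = G a a) ∧
      ∀ x : P → ℝ,
        x ⬝ᵥ (Matrix.of fun a b : P => ∑ c : P, F c a * G c b) *ᵥ x
          = ∑ a : P, d a * ((((Matrix.of fun c a : P => F c a) : Matrix P P ℝ)) *ᵥ x) a ^ 2 := by
  set b : P → LinearExtension P := fun p => toLinearExtension p with hb
  set A : Matrix P P ℝ := Matrix.of fun c a : P => F c a with hA
  set B : Matrix P P ℝ := Matrix.of fun c a : P => G c a with hB
  have hAbt : A.BlockTriangular b := by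
    intro i j hij
    exact hF i j (fun hle => absurd (toLinearExtension.monotone hle) (not_le.2 hij))
  have hBbt : B.BlockTriangular b := by
    intro i j hij
    exact hG i j (fun hle => absurd (toLinearExtension.monotone hle) (not_le.2 hij))
  have hM : (Matrix.of fun a b : P => ∑ c : P, F c a * G c b) = Aᵀ * B := by
    ext i j
    simp [Matrix.mul_apply, hA, hB]
  have hAdet : IsUnit A.det := by
    rw [tri_det A hAbt]
    exact (Finset.prod_ne_zero_iff.2 fun a _ => hFd a).isUnit
  haveI : Invertible A := A.invertibleOfIsUnitDet hAdet
  have hAinv : A⁻¹.BlockTriangular b := blockTriangular_inv_of_blockTriangular hAbt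
  set C : Matrix P P ℝ := B * A⁻¹ with hC
  have hCbt : C.BlockTriangular b := hBbt.mul hAinv
  have hMsym : (Aᵀ * B)ᵀ = Aᵀ * B := by
    have h := hsym.eq
    rw [conjTranspose_eq_transpose_of_trivial, hM] at h
    exact h
  have hBA : Bᵀ * A = Aᵀ * B := by
    have := hMsym
    rwa [Matrix.transpose_mul, Matrix.transpose_transpose] at this
  have hCsym : Cᵀ = C := by
    have h1 : Cᵀ = (Aᵀ)⁻¹ * Bᵀ := by
      rw [hC, Matrix.transpose_mul, Matrix.transpose_nonsing_inv]
    have hAT : IsUnit Aᵀ.det := by rwa [Matrix.det_transpose]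
    have h2 : (Aᵀ)⁻¹ * Bᵀ = B * A⁻¹ := by
      have h3 : Aᵀ * (B * A⁻¹) = Bᵀ := by
        rw [← Matrix.mul_assoc, ← hBA, Matrix.mul_assoc,
          Matrix.mul_nonsing_inv _ hAdet, Matrix.mul_one]
      calc (Aᵀ)⁻¹ * Bᵀ = (Aᵀ)⁻¹ * (Aᵀ * (B * A⁻¹)) := by rw [h3]
        _ = B * A⁻¹ := by rw [Matrix.nonsing_inv_mul_cancel_left _ _ hAT]
    rw [h1, h2, hC]
  -- C is diagonal
  have hCdiag : C = Matrix.diagonal (fun i => C i i) := by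
    ext i j
    by_cases hij : i = j
    · subst hij; simp
    · rw [Matrix.diagonal_apply_ne _ hij]
      rcases lt_or_gt_of_ne (fun h : b i = b j => hij (ple_inj h)) with h | h
      · have : C j i = 0 := hCbt h
        calc C i j = Cᵀ j i := rfl
          _ = C j i := by rw [hCsym]
          _ = 0 := this
      · exact hCbt h
  set d : P → ℝ := fun i => C i i with hd
  have hCA : C * A = B := Matrix.nonsing_inv_mul_cancel_right _ _ hAdet
  have hdF : ∀ a, d a * F a a = G a a := by
    intro a
    have := congrFun (congrFun hCA a) a
    rw [hCdiag] at this
    simpa [Matrix.diagonal_mul, hA, hB] using this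
  refine ⟨d, hdF, fun x => ?_⟩
  have hMC : (Matrix.of fun a b : P => ∑ c : P, F c a * G c b) = Aᵀ * (Matrix.diagonal d * A) := by
    rw [hM, ← hCdiag, hCA]
  rw [hMC, ← Matrix.mulVec_mulVec, Matrix.dotProduct_mulVec, Matrix.vecMul_transpose,
    ← Matrix.mulVec_mulVec]
  simp only [dotProduct, Matrix.mulVec_diagonal]
  exact Finset.sum_congr rfl fun a _ => by ring

end Aux

/-- For a finite poset `P` and incidence-algebra elements `F, G` over `ℝ` such that the matrix
`M` with entries `∑ c, F c a * G c b` is symmetric, `M` is positive definite iff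
`F a a * G a a > 0` for all `a ∈ P`. -/
theorem incidence_matrix_posDef_iff {P : Type*} [Fintype P] [PartialOrder P] [DecidableEq P]
    (F G : P → P → ℝ) (hF : ∀ a b, ¬ a ≤ b → F a b = 0) (hG : ∀ a b, ¬ a ≤ b → G a b = 0)
    (hsym : (Matrix.of fun a b : P => ∑ c : P, F c a * G c b).IsHermitian) :
    (Matrix.of fun a b : P => ∑ c : P, F c a * G c b).PosDef ↔
      ∀ a : P, 0 < F a a * G a a := by
  set A : Matrix P P ℝ := Matrix.of fun c a : P => F c a with hA
  set B : Matrix P P ℝ := Matrix.of fun c a : P => G c a with hB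
  have hAbt : A.BlockTriangular (toLinearExtension : P → LinearExtension P) := by
    intro i j hij
    exact hF i j (fun hle => absurd (toLinearExtension.monotone hle) (not_le.2 hij))
  have hBbt : B.BlockTriangular (toLinearExtension : P → LinearExtension P) := by
    intro i j hij
    exact hG i j (fun hle => absurd (toLinearExtension.monotone hle) (not_le.2 hij))
  have hM : (Matrix.of fun a b : P => ∑ c : P, F c a * G c b) = Aᵀ * B := by
    ext i j
    simp [Matrix.mul_apply, hA, hB]
  constructor
  · intro hPD
    have hdet : (0:ℝ) < ∏ a, F a a * G a a := by
      have h1 := hPD.det_pos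
      rw [hM, Matrix.det_mul, Matrix.det_transpose, tri_det A hAbt, tri_det B hBbt,
        ← Finset.prod_mul_distrib] at h1
      exact h1
    have hne : ∀ a : P, F a a * G a a ≠ 0 := fun a =>
      Finset.prod_ne_zero_iff.1 hdet.ne' a (Finset.mem_univ a)
    have hFd : ∀ a, F a a ≠ 0 := fun a h0 => hne a (by rw [h0, zero_mul])
    obtain ⟨d, hdF, hquad⟩ := core F G hF hG hsym hFd
    intro a
    have hAdet : IsUnit A.det := by
      rw [tri_det A hAbt]
      exact (Finset.prod_ne_zero_iff.2 fun a _ => hFd a).isUnit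
    set x : P → ℝ := A⁻¹ *ᵥ Pi.single a 1 with hx
    have hAx : A *ᵥ x = Pi.single a 1 := by
      rw [hx, Matrix.mulVec_mulVec, Matrix.mul_nonsing_inv _ hAdet, Matrix.one_mulVec]
    have hxne : x ≠ 0 := by
      intro h0
      have : (Pi.single a 1 : P → ℝ) = 0 := by rw [← hAx, h0, Matrix.mulVec_zero]
      have h1 : (1:ℝ) = 0 := by simpa using congrFun this a
      exact one_ne_zero h1
    have hpos := hPD.dotProduct_mulVec_pos hxne
    rw [star_trivial, hquad, ← hA, hAx] at hpos
    have hsum : ∑ b, d b * (Pi.single a 1 : P → ℝ) b ^ 2 = d a := by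
      rw [Finset.sum_eq_single a]
      · simp
      · intro c _ hc; simp [Pi.single_apply, hc]
      · intro h; exact absurd (Finset.mem_univ a) h
    rw [hsum] at hpos
    have hF2 : (0:ℝ) < F a a ^ 2 := pow_two_pos_of_ne_zero (hFd a)
    have h3 : F a a * G a a = d a * F a a ^ 2 := by linear_combination (-(F a a)) * (hdF a)
    rw [h3]
    exact mul_pos hpos hF2
  · intro hd
    have hFd : ∀ a, F a a ≠ 0 := by
      intro a h0
      have := hd a
      rw [h0, zero_mul] at this
      exact lt_irrefl _ this
    obtain ⟨d, hdF, hquad⟩ := core F G hF hG hsym hFd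
    have hdpos : ∀ a, 0 < d a := by
      intro a
      have h1 := hd a
      have h2 := hdF a
      have hF2 : (0:ℝ) < F a a ^ 2 := pow_two_pos_of_ne_zero (hFd a)
      have h3 : F a a * G a a = d a * F a a ^ 2 := by linear_combination (-(F a a)) * h2
      nlinarith [h3, hF2, h1]
    refine PosDef.of_dotProduct_mulVec_pos hsym fun x hx => ?_
    rw [star_trivial, hquad]
    have hAdet : IsUnit A.det := by
      rw [tri_det A hAbt]
      exact (Finset.prod_ne_zero_iff.2 fun a _ => hFd a).isUnit
    have hinj : Function.Injective (A.mulVec) :=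
      Matrix.mulVec_injective_iff_isUnit.2 ((Matrix.isUnit_iff_isUnit_det A).2 hAdet)
    have hyne : A *ᵥ x ≠ 0 := fun h0 => hx (hinj (by rw [h0, Matrix.mulVec_zero]))
    obtain ⟨a, ha⟩ := Function.ne_iff.1 hyne
    refine Finset.sum_pos' (fun c _ => mul_nonneg (hdpos c).le (sq_nonneg _)) ⟨a, Finset.mem_univ a, ?_⟩
    exact mul_pos (hdpos a) (pow_two_pos_of_ne_zero (by simpa using ha))
end

section
/- Let P be a finite poset and F, G ∈ I(P,R). If S ⊆ P is a lower order ideal (a ∈ S and b ≤ a implies b ∈ S), then the submatrix of the matrix (Σ_{c ∈ P} F(c,a)·G(c,b))_{a,b ∈ P} obtained by restricting rows and columns to S equals the matrix (Σ_{c ∈ S} F(c,a)·G(c,b))_{a,b ∈ S}; in particular its determinant is Π_{a ∈ S} F(a,a)·G(a,a). -/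
/-!
Since `F c a = 0` unless `c ≤ a` and `S` is closed downward, only `c ∈ S` contribute to the
`(a, b)` entry for `a ∈ S`. Hence the restricted matrix is `Fₛᵀ * Gₛ`, where `Fₛ`, `Gₛ` are the
restrictions of `F`, `G` to `S`; both are upper triangular with respect to any linear extension
of the order on `S`, so the determinant is the product of their diagonals.
-/

open Finset Matrix

theorem Finset.sum_univ_eq_sum_of_isLowerSet {P M : Type*} [Fintype P] [Preorder P]
    [AddCommMonoid M] {S : Finset P} (hS : IsLowerSet (S : Set P)) {a : P} (ha : a ∈ S)
    (f : P → M) (hf : ∀ c, ¬ c ≤ a → f c = 0) : ∑ c, f c = ∑ c ∈ S, f c :=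
  (sum_subset (subset_univ S) fun c _ hc => hf c fun hca => hc (hS hca ha)).symm

theorem Matrix.det_of_upperTriangular_of_partialOrder {m R : Type*} [Fintype m] [DecidableEq m]
    [PartialOrder m] [CommRing R] (M : Matrix m m R) (hM : ∀ i j, ¬ i ≤ j → M i j = 0) :
    M.det = ∏ i, M i i := by
  let _ : Fintype (LinearExtension m) := ‹Fintype m›
  let e : m ≃ LinearExtension m := Equiv.refl m
  have hupper : (M.reindex e e).IsUpperTriangular := fun i j hji =>
    hM _ _ fun hij => (toLinearExtension.monotone hij).not_gt hji
  rw [← det_reindex_self e, det_of_isUpperTriangular hupper]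
  rfl

/-- If `S` is a lower order ideal of a finite poset `P`, then the restriction to `S` of the
matrix `(∑ c ∈ P, F c a * G c b)` coincides with the matrix `(∑ c ∈ S, F c a * G c b)`
indexed by `S`, and its determinant is `∏ a ∈ S, F a a * G a a`. -/
theorem incidence_matrix_lower_ideal {P : Type*} [Fintype P] [PartialOrder P] [DecidableEq P]
    {R : Type*} [CommRing R] (F G : P → P → R)
    (hF : ∀ a b, ¬ a ≤ b → F a b = 0) (hG : ∀ a b, ¬ a ≤ b → G a b = 0)
    (S : Finset P) (hS : ∀ a ∈ S, ∀ b, b ≤ a → b ∈ S) :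
    (∀ a b : S, ∑ c : P, F c a * G c b = ∑ c ∈ S, F c a * G c b) ∧
      Matrix.det (Matrix.of fun a b : S => ∑ c : P, F c a * G c b) =
        ∏ a ∈ S, F a a * G a a := by
  have hsum (a b : S) : ∑ c : P, F c a * G c b = ∑ c ∈ S, F c a * G c b :=
    sum_univ_eq_sum_of_isLowerSet (fun _ c hca ha => hS _ ha c hca) a.2 _
      fun c hc => by rw [hF c a hc, zero_mul]
  refine ⟨hsum, ?_⟩
  let FS : Matrix S S R := (Matrix.of F).submatrix (↑) (↑)
  let GS : Matrix S S R := (Matrix.of G).submatrix (↑) (↑)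
  have hfactor : (Matrix.of fun a b : S => ∑ c : P, F c a * G c b) = FSᵀ * GS := by
    ext a b
    rw [Matrix.of_apply, hsum, Matrix.mul_apply, ← sum_coe_sort S]
    rfl
  rw [hfactor, Matrix.det_mul, Matrix.det_transpose,
    FS.det_of_upperTriangular_of_partialOrder fun i j => hF i j,
    GS.det_of_upperTriangular_of_partialOrder fun i j => hG i j,
    ← prod_mul_distrib, ← prod_coe_sort S]
  rfl
end

section
/- Let S = {a_1,...,a_n} be a factor-closed set of positive integers. Then the GCD matrix (gcd(a_i,a_j)) is positive definite. -/
lemma gcd_eq_sum_totient (S : Finset ℕ) (hpos : ∀ a ∈ S, 0 < a)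
    (hfc : ∀ a ∈ S, ∀ d, d ∣ a → d ∈ S) {a b : ℕ} (ha : a ∈ S) (hb : b ∈ S) :
    ((Nat.gcd a b : ℝ)) = ∑ d ∈ S, if d ∣ a ∧ d ∣ b then (Nat.totient d : ℝ) else 0 := by
  rw [Finset.sum_ite, Finset.sum_const_zero, add_zero]
  have hset : S.filter (fun d => d ∣ a ∧ d ∣ b) = (Nat.gcd a b).divisors := by
    ext d
    simp only [Finset.mem_filter, Nat.mem_divisors, Nat.dvd_gcd_iff]
    constructor
    · rintro ⟨_, hda, hdb⟩
      exact ⟨⟨hda, hdb⟩, Nat.gcd_ne_zero_left (hpos a ha).ne'⟩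
    · rintro ⟨⟨hda, hdb⟩, _⟩
      exact ⟨hfc a ha d hda, hda, hdb⟩
  rw [hset]
  rw [← Nat.cast_sum]
  norm_cast
  exact (Nat.sum_totient _).symm

/-- The GCD matrix of a factor-closed set of positive integers is positive definite. -/
theorem gcd_matrix_posDef (S : Finset ℕ) (hpos : ∀ a ∈ S, 0 < a)
    (hfc : ∀ a ∈ S, ∀ d, d ∣ a → d ∈ S) :
    (Matrix.of fun i j : S => (Nat.gcd i j : ℝ)).PosDef := by
  rw [Matrix.posDef_iff_dotProduct_mulVec]
  constructor
  · ext i j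
    simp [Matrix.conjTranspose, Nat.gcd_comm]
  · intro x hx
    -- rewrite quadratic form
    have hquad : dotProduct (star x) (Matrix.mulVec (Matrix.of fun (i j : S) => (Nat.gcd i j : ℝ)) x)
        = ∑ d ∈ S.attach, (Nat.totient d : ℝ) *
            (∑ i ∈ S.attach, if (d : ℕ) ∣ (i : ℕ) then x i else 0) ^ 2 := by
      simp only [dotProduct, Matrix.mulVec, Matrix.of_apply, Pi.star_apply,
        star_trivial]
      have key : ∀ i j : S, (Nat.gcd i j : ℝ) =
          ∑ d ∈ S.attach, if (d : ℕ) ∣ (i : ℕ) ∧ (d : ℕ) ∣ (j : ℕ)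
            then (Nat.totient d : ℝ) else 0 := by
        intro i j
        rw [gcd_eq_sum_totient S hpos hfc i.2 j.2, ← Finset.sum_attach S]
      calc ∑ i : S, x i * ∑ j : S, (Nat.gcd i j : ℝ) * x j
          = ∑ i ∈ S.attach, ∑ j ∈ S.attach, ∑ d ∈ S.attach,
              (if (d : ℕ) ∣ (i : ℕ) ∧ (d : ℕ) ∣ (j : ℕ) then (Nat.totient d : ℝ) else 0)
                * (x i * x j) := by
            refine Finset.sum_congr rfl fun i _ => ?_
            rw [Finset.mul_sum]
            refine Finset.sum_congr rfl fun j _ => ?_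
            rw [key i j, Finset.sum_mul, Finset.mul_sum]
            refine Finset.sum_congr rfl fun d _ => ?_
            ring
        _ = ∑ d ∈ S.attach, ∑ i ∈ S.attach, ∑ j ∈ S.attach,
              (if (d : ℕ) ∣ (i : ℕ) ∧ (d : ℕ) ∣ (j : ℕ) then (Nat.totient d : ℝ) else 0)
                * (x i * x j) := by
            exact (Finset.sum_congr rfl fun i _ => Finset.sum_comm).trans Finset.sum_comm
        _ = ∑ d ∈ S.attach, (Nat.totient d : ℝ) *
              (∑ i ∈ S.attach, if (d : ℕ) ∣ (i : ℕ) then x i else 0) ^ 2 := by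
            refine Finset.sum_congr rfl fun d _ => ?_
            rw [sq, Finset.sum_mul_sum]
            rw [Finset.mul_sum]
            refine Finset.sum_congr rfl fun i _ => ?_
            rw [Finset.mul_sum]
            refine Finset.sum_congr rfl fun j _ => ?_
            by_cases hdi : (d : ℕ) ∣ (i : ℕ) <;> by_cases hdj : (d : ℕ) ∣ (j : ℕ) <;>
              simp [hdi, hdj] <;> ring
    rw [hquad]
    -- find maximal element of support
    have hne : (S.attach.filter (fun i => x i ≠ 0)).Nonempty := by
      by_contra h
      apply hx
      funext i
      rw [Finset.not_nonempty_iff_eq_empty, Finset.filter_eq_empty_iff] at h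
      have := h (Finset.mem_attach _ i)
      simpa using this
    obtain ⟨a, haS, hamax⟩ := Finset.exists_max_image _ (fun i : S => (i : ℕ)) hne
    have hax : x a ≠ 0 := (Finset.mem_filter.mp haS).2
    have hTa : (∑ i ∈ S.attach, if (a : ℕ) ∣ (i : ℕ) then x i else 0) = x a := by
      rw [Finset.sum_eq_single a]
      · simp
      · intro i _ hia
        by_cases hxi : x i = 0
        · simp [hxi]
        · have hiS : i ∈ S.attach.filter (fun i => x i ≠ 0) := by
            simp [Finset.mem_filter, hxi]
          have hle : (i : ℕ) ≤ (a : ℕ) := hamax i hiS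
          by_cases hdi : (a : ℕ) ∣ (i : ℕ)
          · exfalso
            have : (a : ℕ) ≤ (i : ℕ) := Nat.le_of_dvd (hpos _ i.2) hdi
            exact hia (Subtype.ext (le_antisymm hle this))
          · simp [hdi]
      · intro h; exact absurd (Finset.mem_attach _ a) h
    apply Finset.sum_pos'
    · intro d _
      positivity
    · refine ⟨a, Finset.mem_attach _ a, ?_⟩
      rw [hTa]
      have : 0 < Nat.totient (a : ℕ) := Nat.totient_pos.mpr (hpos _ a.2)
      positivity
end

section
/- Let S = {a_1,...,a_n} be a GCD-closed set of distinct positive integers (i.e. gcd(a_i,a_j) ∈ S for all i,j), ordered so that a_i | a_j implies i ≤ j. Then the GCD matrix (gcd(a_i,a_j)) has determinant Π_{i=1}^n ( Σ_{d ⊴ a_i} φ(d) ), where the notation d ⊴ a_i means d | a_i but d ∤ a_j for all j < i. -/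
open Finset Matrix

/-- Key structural lemma: if `d ∣ a i`, `d ∣ a j`, and `j` is the first index whose
entry is divisible by `d`, then `a j ∣ a i` (uses GCD-closedness). -/
lemma beslin_ligh_key {n : ℕ} (a : Fin n → ℕ)
    (hgcd : ∀ i j, ∃ k, a k = Nat.gcd (a i) (a j))
    (hlin : ∀ i j, a i ∣ a j → i ≤ j)
    {d : ℕ} {i j : Fin n} (hdi : d ∣ a i) (hdj : d ∣ a j)
    (hmin : ∀ l, l < j → ¬ d ∣ a l) : a j ∣ a i := by
  obtain ⟨m, hm⟩ := hgcd i j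
  have hmj : m ≤ j := hlin m j (hm ▸ Nat.gcd_dvd_right _ _)
  have hdm : d ∣ a m := hm ▸ Nat.dvd_gcd hdi hdj
  have hmeq : m = j := le_antisymm hmj (not_lt.1 fun h => hmin m h hdm)
  subst hmeq
  exact hm ▸ Nat.gcd_dvd_left _ _

lemma beslin_ligh_entry {n : ℕ} (a : Fin n → ℕ) (hpos : ∀ i, 0 < a i)
    (hgcd : ∀ i j, ∃ k, a k = Nat.gcd (a i) (a j))
    (hlin : ∀ i j, a i ∣ a j → i ≤ j) (i k : Fin n) :
    Nat.gcd (a i) (a k) =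
      ∑ j : Fin n, if a j ∣ a i ∧ a j ∣ a k then
        ∑ d ∈ (a j).divisors.filter (fun d => ∀ l, l < j → ¬ d ∣ a l), d.totient
      else 0 := by
  classical
  set g := Nat.gcd (a i) (a k) with hg
  have hg0 : g ≠ 0 := Nat.gcd_ne_zero_left (hpos i).ne'
  -- P j d : d ⊴ a j
  set P : Fin n → ℕ → Prop := fun j d => d ∣ a j ∧ ∀ l, l < j → ¬ d ∣ a l with hP
  -- step 1: each inner sum, restricted by the ite, equals a sum over divisors of g
  have hstep : ∀ j : Fin n,
      (if a j ∣ a i ∧ a j ∣ a k then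
        ∑ d ∈ (a j).divisors.filter (fun d => ∀ l, l < j → ¬ d ∣ a l), d.totient
      else 0) = ∑ d ∈ g.divisors.filter (P j), d.totient := by
    intro j
    by_cases hj : a j ∣ a i ∧ a j ∣ a k
    · rw [if_pos hj]
      apply Finset.sum_congr _ (fun _ _ => rfl)
      ext d
      simp only [Finset.mem_filter, Nat.mem_divisors, hP]
      constructor
      · rintro ⟨⟨hdaj, _⟩, hmin⟩
        exact ⟨⟨hdaj.trans (Nat.dvd_gcd hj.1 hj.2), hg0⟩, hdaj, hmin⟩
      · rintro ⟨_, hdaj, hmin⟩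
        exact ⟨⟨hdaj, (hpos j).ne'⟩, hmin⟩
    · rw [if_neg hj]
      symm
      apply Finset.sum_eq_zero
      intro d hd
      exfalso
      simp only [Finset.mem_filter, Nat.mem_divisors, hP] at hd
      obtain ⟨⟨hdg, _⟩, hdaj, hmin⟩ := hd
      obtain ⟨m, hm⟩ := hgcd i k
      have hajm : a j ∣ a m :=
        beslin_ligh_key a hgcd hlin (hm ▸ hdg) hdaj hmin
      rw [hm] at hajm
      exact hj ⟨hajm.trans (Nat.gcd_dvd_left _ _), hajm.trans (Nat.gcd_dvd_right _ _)⟩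
  rw [Finset.sum_congr rfl (fun j _ => hstep j)]
  -- step 2: the double sum collapses: each divisor of g lies in exactly one fiber
  have : ∑ j : Fin n, ∑ d ∈ g.divisors.filter (P j), d.totient
      = ∑ d ∈ g.divisors, d.totient := by
    simp only [Finset.sum_filter]
    rw [Finset.sum_comm]
    apply Finset.sum_congr rfl
    intro d hd
    have hdg : d ∣ g := (Nat.mem_divisors.1 hd).1
    have hdi : d ∣ a i := hdg.trans (Nat.gcd_dvd_left _ _)
    have hne : (Finset.univ.filter (fun j => d ∣ a j)).Nonempty :=
      ⟨i, by simp [hdi]⟩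
    set j0 := (Finset.univ.filter (fun j => d ∣ a j)).min' hne with hj0
    have hj0mem : d ∣ a j0 := by
      have := Finset.min'_mem _ hne
      simpa using this
    have hj0min : ∀ l, l < j0 → ¬ d ∣ a l := by
      intro l hl hdl
      exact absurd (Finset.min'_le _ l (by simp [hdl])) (not_le.2 hl)
    rw [Finset.sum_eq_single j0]
    · exact if_pos (show P j0 d from ⟨hj0mem, hj0min⟩)
    · intro j _ hjne
      rw [if_neg]
      rintro ⟨hdaj, hmin⟩
      apply hjne
      have h1 : ¬ j0 < j := fun h => hmin j0 h hj0mem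
      have h2 : ¬ j < j0 := fun h => hj0min j h hdaj
      exact le_antisymm (not_lt.1 h1) (not_lt.1 h2)
    · intro h; exact absurd (Finset.mem_univ j0) h
  rw [this, Nat.sum_totient]

/-- **Beslin–Ligh.** For a GCD-closed set `{a₁,…,aₙ}` of distinct positive integers listed
so that `aᵢ ∣ aⱼ` implies `i ≤ j`, the GCD matrix has determinant
`∏ᵢ ∑_{d ⊴ aᵢ} φ(d)`, where `d ⊴ aᵢ` means `d ∣ aᵢ` and `d ∤ aⱼ` for all `j < i`. -/
theorem det_gcd_closed (n : ℕ) (a : Fin n → ℕ) (hpos : ∀ i, 0 < a i)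
    (hinj : Function.Injective a)
    (hgcd : ∀ i j, ∃ k, a k = Nat.gcd (a i) (a j))
    (hlin : ∀ i j, a i ∣ a j → i ≤ j) :
    Matrix.det (Matrix.of fun i j : Fin n => (Nat.gcd (a i) (a j) : ℤ)) =
      ∏ i : Fin n,
        ∑ d ∈ (a i).divisors.filter (fun d => ∀ j, j < i → ¬ d ∣ a j),
          (Nat.totient d : ℤ) := by
  classical
  set Sn : Fin n → ℕ :=
    fun j => ∑ d ∈ (a j).divisors.filter (fun d => ∀ l, l < j → ¬ d ∣ a l), d.totient with hSn
  set E : Matrix (Fin n) (Fin n) ℤ :=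
    Matrix.of fun i j : Fin n => if a j ∣ a i then (1 : ℤ) else 0 with hEdef
  have hfact : (Matrix.of fun i j : Fin n => (Nat.gcd (a i) (a j) : ℤ)) =
      E * Matrix.diagonal (fun j => (Sn j : ℤ)) * Eᵀ := by
    ext i k
    have h1 : (E * Matrix.diagonal (fun j => (Sn j : ℤ)) * Eᵀ) i k
        = ∑ j : Fin n, E i j * (Sn j : ℤ) * E k j := by
      rw [Matrix.mul_apply]
      simp only [Matrix.mul_diagonal, Matrix.transpose_apply]
    rw [h1]
    have h2 : ∀ j : Fin n, E i j * (Sn j : ℤ) * E k j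
        = if a j ∣ a i ∧ a j ∣ a k then (Sn j : ℤ) else 0 := by
      intro j
      simp only [hEdef, Matrix.of_apply]
      by_cases h₁ : a j ∣ a i <;> by_cases h₂ : a j ∣ a k <;>
        simp [h₁, h₂]
    rw [Finset.sum_congr rfl (fun j _ => h2 j)]
    have := beslin_ligh_entry a hpos hgcd hlin i k
    have hcast : ((Nat.gcd (a i) (a k) : ℕ) : ℤ)
        = ((∑ j : Fin n, if a j ∣ a i ∧ a j ∣ a k then Sn j else 0 : ℕ) : ℤ) := by
      exact_mod_cast congrArg (Nat.cast : ℕ → ℤ) this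
    simp only [Matrix.of_apply]
    rw [hcast]
    push_cast
    apply Finset.sum_congr rfl
    intro j _
    split <;> simp
  have hEtri : E.BlockTriangular (OrderDual.toDual) := by
    intro i j hij
    simp only [hEdef, Matrix.of_apply]
    rw [if_neg]
    intro hdvd
    exact absurd (hlin j i hdvd) (not_le.2 hij)
  have hEdet : E.det = 1 := by
    rw [Matrix.det_of_lowerTriangular E hEtri]
    apply Finset.prod_eq_one
    intro i _
    simp [hEdef]
  rw [hfact, Matrix.det_mul, Matrix.det_mul, Matrix.det_transpose, hEdet,
    Matrix.det_diagonal, one_mul, mul_one]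
  apply Finset.prod_congr rfl
  intro j _
  simp [hSn, Nat.cast_sum]
end

section
/- Let S = {a_1,...,a_n} be a factor-closed set of positive integers and let M be the n×n matrix with entries M(i,j) = lcm(a_i, a_j). Then det M = Π_{k=1}^n π(a_k), where π(m) = Σ_{d | m} μ(m/d)·(m²/d) = m·Π_{p | m} (1 − p), the product running over the primes p dividing m. -/
open ArithmeticFunction Finset

noncomputable def finv : ArithmeticFunction ℚ := ⟨fun n => (n : ℚ)⁻¹ , by simp⟩

@[simp] lemma finv_apply (n : ℕ) : finv n = (n : ℚ)⁻¹ := rfl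

noncomputable def gfun : ArithmeticFunction ℚ := (moebius : ArithmeticFunction ℤ) * finv

lemma gfun_apply (n : ℕ) : gfun n = ∑ e ∈ n.divisors, (moebius (n / e) : ℚ) * (e : ℚ)⁻¹ := by
  rw [gfun, mul_apply]
  simp only [intCoe_apply, finv_apply]
  exact Nat.sum_divisorsAntidiagonal' (f := fun x y => ((moebius x : ℤ) : ℚ) * (y : ℚ)⁻¹)

lemma sum_gfun (n : ℕ) : ∑ d ∈ n.divisors, gfun d = (n : ℚ)⁻¹ := by
  have h : (↑zeta * gfun) n = finv n := by
    rw [gfun, ← mul_assoc, coe_zeta_mul_coe_moebius, one_mul]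
  rw [← coe_zeta_mul_apply, h, finv_apply]

section
variable (S : Finset ℕ)

noncomputable def Zmat : Matrix S S ℚ := Matrix.of fun i k => if (k:ℕ) ∣ (i:ℕ) then 1 else 0

lemma det_Zmat (hpos : ∀ a ∈ S, 0 < a) : (Zmat S).det = 1 := by
  rw [Matrix.det_of_lowerTriangular]
  · rw [Finset.prod_eq_one]
    intro i _
    simp [Zmat]
  · intro i k h
    simp only [OrderDual.toDual_lt_toDual] at h
    have hik : (i:ℕ) < (k:ℕ) := h
    simp only [Zmat, Matrix.of_apply, ite_eq_right_iff]
    intro hdvd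
    exact absurd (Nat.le_of_dvd (hpos i i.2) hdvd) (not_le.mpr hik)
end

open ArithmeticFunction in
/-- **Smith's LCM determinant.** For a factor-closed set `S` of positive integers, the LCM
matrix `(lcm aᵢ aⱼ)` has determinant `∏_{a ∈ S} π(a)` where
`π(m) = ∑_{d ∣ m} μ(m/d) · m²/d` (here `m²/d = m·(m/d)` for `d ∣ m`). -/
theorem det_lcm_matrix (S : Finset ℕ) (hpos : ∀ a ∈ S, 0 < a)
    (hfc : ∀ a ∈ S, ∀ d, d ∣ a → d ∈ S) :
    Matrix.det (Matrix.of fun i j : S => (Nat.lcm i j : ℤ)) =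
      ∏ a ∈ S, ∑ d ∈ a.divisors, (moebius (a / d) : ℤ) * ((a : ℤ) * (a / d : ℕ)) := by
  classical
  set E : Matrix S S ℚ := Matrix.of fun i k => if (k:ℕ) ∣ (i:ℕ) then (i:ℚ) else 0 with hE
  set D : Matrix S S ℚ := Matrix.diagonal (fun k : S => gfun (k:ℕ)) with hD
  have hfact : (Matrix.of fun i j : S => (Nat.lcm i j : ℚ)) = E * D * E.transpose := by
    ext i j
    rw [Matrix.mul_apply]
    have hterm : ∀ k : S, (E * D) i k * E.transpose k j =
        (if (k:ℕ) ∣ Nat.gcd i j then (i:ℚ) * j * gfun (k:ℕ) else 0) := by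
      intro k
      rw [Matrix.mul_diagonal, Matrix.transpose_apply]
      simp only [hE, Matrix.of_apply, Nat.dvd_gcd_iff]
      by_cases h1 : (k:ℕ) ∣ (i:ℕ) <;> by_cases h2 : (k:ℕ) ∣ (j:ℕ) <;>
        simp [h1, h2] <;> ring
    rw [Finset.sum_congr rfl (fun k _ => hterm k)]
    have hcoe : ∑ k : S, (if (k:ℕ) ∣ Nat.gcd i j then (i:ℚ) * j * gfun (k:ℕ) else 0) =
        ∑ k ∈ S, (if k ∣ Nat.gcd i j then (i:ℚ) * j * gfun k else 0) :=
      Finset.sum_coe_sort S (fun k => if k ∣ Nat.gcd i j then (i:ℚ) * j * gfun k else 0)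
    rw [hcoe, Finset.sum_ite, Finset.sum_const_zero, add_zero]
    have hgpos : 0 < Nat.gcd i j := Nat.gcd_pos_of_pos_left _ (hpos i i.2)
    have hfe : S.filter (fun k => k ∣ Nat.gcd (i:ℕ) (j:ℕ)) = (Nat.gcd (i:ℕ) (j:ℕ)).divisors := by
      ext d
      simp only [Finset.mem_filter, Nat.mem_divisors]
      constructor
      · rintro ⟨_, hd⟩; exact ⟨hd, hgpos.ne'⟩
      · rintro ⟨hd, _⟩
        exact ⟨hfc i i.2 d (hd.trans (Nat.gcd_dvd_left _ _)), hd⟩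
    rw [hfe, ← Finset.mul_sum, sum_gfun]
    have hij : ((Nat.gcd (i:ℕ) (j:ℕ) : ℕ) : ℚ) ≠ 0 := Nat.cast_ne_zero.mpr hgpos.ne'
    have := Nat.gcd_mul_lcm (i:ℕ) (j:ℕ)
    have hcast : ((Nat.gcd (i:ℕ) (j:ℕ) : ℕ) : ℚ) * ((Nat.lcm (i:ℕ) (j:ℕ) : ℕ) : ℚ)
        = (i:ℚ) * (j:ℚ) := by exact_mod_cast congrArg (Nat.cast : ℕ → ℚ) this
    field_simp
    simp only [Matrix.of_apply]
    linarith [hcast]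
  have hdetE : E.det = ∏ a ∈ S.attach, ((a:ℕ) : ℚ) := by
    have : E = Matrix.diagonal (fun i : S => ((i:ℕ) : ℚ)) * Zmat S := by
      ext i k
      rw [Matrix.diagonal_mul]
      simp only [hE, Zmat, Matrix.of_apply]
      by_cases h : (k:ℕ) ∣ (i:ℕ) <;> simp [h]
    rw [this, Matrix.det_mul, Matrix.det_diagonal, det_Zmat S hpos, mul_one]
    rfl
  have hkey : (Matrix.of fun i j : S => (Nat.lcm i j : ℚ)).det =
      ∏ a ∈ S.attach, (((a:ℕ):ℚ))^2 * gfun (a:ℕ) := by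
    rw [hfact, Matrix.det_mul, Matrix.det_mul, Matrix.det_transpose, hdetE,
      hD, Matrix.det_diagonal]
    rw [Finset.univ_eq_attach, ← Finset.prod_mul_distrib, ← Finset.prod_mul_distrib]
    exact Finset.prod_congr rfl fun a _ => by ring
  -- identify each factor
  have hfac : ∀ a ∈ S, (((a:ℕ):ℚ))^2 * gfun a =
      ((∑ d ∈ a.divisors, (moebius (a / d) : ℤ) * ((a : ℤ) * (a / d : ℕ)) : ℤ) : ℚ) := by
    intro a ha
    rw [gfun_apply, Finset.mul_sum, Int.cast_sum]
    apply Finset.sum_congr rfl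
    intro d hd
    obtain ⟨hdvd, -⟩ := Nat.mem_divisors.mp hd
    have hd0 : (d:ℚ) ≠ 0 := Nat.cast_ne_zero.mpr (Nat.pos_of_ne_zero (by
      rintro rfl; exact absurd (Nat.eq_zero_of_zero_dvd hdvd) (hpos a ha).ne')).ne'
    have hcdiv : ((a/d : ℕ) : ℚ) = (a:ℚ)/(d:ℚ) := Nat.cast_div hdvd hd0
    rw [Int.cast_mul, Int.cast_mul, Int.cast_natCast, Int.cast_natCast, hcdiv]
    field_simp
  -- cast determinant
  have hcast : ((Matrix.det (Matrix.of fun i j : S => (Nat.lcm i j : ℤ)) : ℤ) : ℚ) =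
      (Matrix.of fun i j : S => (Nat.lcm i j : ℚ)).det := by
    have h := RingHom.map_det (Int.castRingHom ℚ) (Matrix.of fun i j : S => (Nat.lcm i j : ℤ))
    simp only [Int.coe_castRingHom] at h
    rw [h]
    congr 1
  have final : ((Matrix.det (Matrix.of fun i j : S => (Nat.lcm i j : ℤ)) : ℤ) : ℚ) =
      ((∏ a ∈ S, ∑ d ∈ a.divisors, (moebius (a / d) : ℤ) * ((a : ℤ) * (a / d : ℕ)) : ℤ) : ℚ) := by
    rw [hcast, hkey]
    rw [Int.cast_prod, ← Finset.prod_attach S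
      (fun a => ((∑ d ∈ a.divisors, (moebius (a / d) : ℤ) * ((a : ℤ) * (a / d : ℕ)) : ℤ) : ℚ))]
    exact Finset.prod_congr rfl (fun a _ => hfac a a.2)
  exact_mod_cast final
end
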